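/- arXiv:2505.04316 — 7 statements merged into one kernel-verified Lean document; each statement's English description precedes it below -/
import Mathlib

section
/- Let k ≥ 2 be an integer. For the affine su(2) level-k fusion rules, define the fusion multiplicity N(i,j;p) for i,j,p ∈ {0,...,k} to be 1 if |i-j| ≤ p ≤ min(i+j, 2k-i-j) and p ≡ i+j (mod 2), and 0 otherwise. Then for any a,i,j ∈ {0,...,k} with 0 < a < k, 0 < i < k, 0 < j < k, if N(a,a;i) = 1 and N(a,a;j) = 1, then the sum over p ∈ {0,...,k} of N(a,a;p)·N(i,j;p) is strictly greater than 1. -/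
/-- su(2)_k fusion multiplicity: `N k i j p = 1` iff `|i-j| ≤ p ≤ min (i+j) (2k-i-j)`
and `p ≡ i + j (mod 2)`, else `0`. -/
def su2N (k i j p : ℕ) : ℕ :=
  if (max i j - min i j) ≤ p ∧ p ≤ min (i + j) (2 * k - i - j) ∧ (p + i + j) % 2 = 0
  then 1 else 0

theorem stmt_0 (k a i j : ℕ) (hk : 2 ≤ k)
    (hak : a ≤ k) (hik : i ≤ k) (hjk : j ≤ k)
    (ha0 : 0 < a) (ha1 : a < k) (hi0 : 0 < i) (hi1 : i < k) (hj0 : 0 < j) (hj1 : j < k)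
    (hNi : su2N k a a i = 1) (hNj : su2N k a a j = 1) :
    1 < ∑ p ∈ Finset.range (k + 1), su2N k a a p * su2N k i j p := by
  rw [su2N] at hNi hNj
  split_ifs at hNi with h1
  split_ifs at hNj with h2
  set p1 := max i j - min i j with hp1def
  have hp1 : su2N k a a p1 * su2N k i j p1 = 1 := by
    rw [su2N, su2N, if_pos (by omega), if_pos (by omega)]
  have hp2 : su2N k a a (p1 + 2) * su2N k i j (p1 + 2) = 1 := by
    rw [su2N, su2N, if_pos (by omega), if_pos (by omega)]
  have hsub : ({p1, p1 + 2} : Finset ℕ) ⊆ Finset.range (k + 1) := by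
    intro x hx
    simp only [Finset.mem_insert, Finset.mem_singleton] at hx
    rcases hx with rfl | rfl <;> simp only [Finset.mem_range] <;> omega
  have hle := Finset.sum_le_sum_of_subset (f := fun p => su2N k a a p * su2N k i j p) hsub
  rw [Finset.sum_pair (by omega)] at hle
  have hle' : su2N k a a p1 * su2N k i j p1 + su2N k a a (p1 + 2) * su2N k i j (p1 + 2) ≤
      ∑ p ∈ Finset.range (k + 1), su2N k a a p * su2N k i j p := hle
  omega
end

section
/- Let k ≥ 2 be an integer with fusion multiplicity N(i,j;p) for su(2)_k as: N(i,j;p) = 1 if |i-j| ≤ p ≤ min(i+j, 2k-i-j) and p ≡ i+j (mod 2), else 0. If a,i,j ∈ {0,...,k} satisfy i ≥ j ≥ 2, i < k, a ∉ {0,k}, N(a,a;i) = 1 and N(a,a;j) = 1, then both N(a,a;i-j) = 1 and N(a,a;i-j+2) = 1, and both N(i,j;i-j) = 1 and N(i,j;i-j+2) = 1. -/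
theorem stmt_2 (k a i j : ℕ) (hk : 2 ≤ k)
    (hak : a ≤ k) (hik : i ≤ k) (hjk : j ≤ k)
    (hij : j ≤ i) (hj2 : 2 ≤ j) (hik' : i < k) (ha0 : a ≠ 0) (hak' : a ≠ k)
    (hNi : su2N k a a i = 1) (hNj : su2N k a a j = 1) :
    su2N k a a (i - j) = 1 ∧ su2N k a a (i - j + 2) = 1 ∧
    su2N k i j (i - j) = 1 ∧ su2N k i j (i - j + 2) = 1 := by
  simp only [su2N, max_self, min_self, le_min_iff, min_le_iff] at *
  split_ifs at hNi hNj with h1 h2 <;> simp_all <;> omega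
end

section
/- Define, for nonnegative integers a ≥ b, level k, and a weight ν = (ν₁,ν₂), the BMW quantities for λ = (a,b), μ = (b,a): A = (1/3)(2(a+b+ν₂) + b+a+ν₁), B = (1/3)(a+b+ν₂ + 2(b+a+ν₁)), k₀min = max(a+b, ν₁+ν₂, A-a, A-b, A-ν₂, B-b, B-a, B-ν₁), k₀max = min(A,B), and affine multiplicity N^(k) = min(k₀max,k) - k₀min + 1 if k ≥ k₀min and A,B ∈ ℤ≥0 and k₀max ≥ k₀min, else 0. Then the simple current ν = (0,k) satisfies N^(k) ≥ 1 for λ=(a,b), μ=(b,a) with (a,b) not a simple current if and only if a = b and k = 3a. -/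
open Classical in
/-- BMW quantity `A` for su(3)_k fusion of `λ = (l1,l2)`, `μ = (m1,m2)` into `ν = (n1,n2)`. -/
noncomputable def bmwA (l1 l2 m1 m2 n1 n2 : ℤ) : ℚ :=
  (2 * ((l1 : ℚ) + m1 + n2) + l2 + m2 + n1) / 3

open Classical in
/-- BMW quantity `B`. -/
noncomputable def bmwB (l1 l2 m1 m2 n1 n2 : ℤ) : ℚ :=
  ((l1 : ℚ) + m1 + n2 + 2 * ((l2 : ℚ) + m2 + n1)) / 3

/-- BMW quantity `k₀max = min(A,B)`. -/
noncomputable def bmwKmax (l1 l2 m1 m2 n1 n2 : ℤ) : ℚ :=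
  min (bmwA l1 l2 m1 m2 n1 n2) (bmwB l1 l2 m1 m2 n1 n2)

/-- BMW quantity `k₀min`, the maximum of the nine expressions of the BMW formula. -/
noncomputable def bmwKmin (l1 l2 m1 m2 n1 n2 : ℤ) : ℚ :=
  let A := bmwA l1 l2 m1 m2 n1 n2
  let B := bmwB l1 l2 m1 m2 n1 n2
  max (max (max ((l1 : ℚ) + l2) (max ((m1 : ℚ) + m2) ((n1 : ℚ) + n2)))
        (max (max (A - l1) (A - m1)) (A - n2)))
      (max (max (B - l2) (B - m2)) (B - n1))

open Classical in
/-- BMW affine su(3)_k fusion multiplicity `N^(k)`: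
`min(k₀max, k) - k₀min + 1` if `k ≥ k₀min`, `A, B ∈ ℤ≥0` and `k₀max ≥ k₀min`, else `0`. -/
noncomputable def bmwN (k : ℕ) (l1 l2 m1 m2 n1 n2 : ℤ) : ℚ :=
  if bmwKmin l1 l2 m1 m2 n1 n2 ≤ (k : ℚ) ∧
      (∃ n : ℕ, bmwA l1 l2 m1 m2 n1 n2 = n) ∧ (∃ n : ℕ, bmwB l1 l2 m1 m2 n1 n2 = n) ∧
      bmwKmin l1 l2 m1 m2 n1 n2 ≤ bmwKmax l1 l2 m1 m2 n1 n2
  then min (bmwKmax l1 l2 m1 m2 n1 n2) (k : ℚ) - bmwKmin l1 l2 m1 m2 n1 n2 + 1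
  else 0

theorem stmt_4 (a b k : ℕ) (hba : b ≤ a) (hint : a + b ≤ k)
    (hsc : ¬((a = 0 ∧ b = 0) ∨ (a = k ∧ b = 0) ∨ (a = 0 ∧ b = k))) :
    1 ≤ bmwN k a b b a 0 k ↔ (a = b ∧ k = 3 * a) := by
  have hA : bmwA a b b a 0 k = (a : ℚ) + b + 2 * k / 3 := by
    simp [bmwA]; push_cast; ring
  have hB : bmwB a b b a 0 k = (a : ℚ) + b + k / 3 := by
    simp [bmwB]; push_cast; ring
  have hKmax : bmwKmax a b b a 0 k = (a : ℚ) + b + k / 3 := by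
    rw [bmwKmax, hA, hB, min_eq_right]
    have : (0:ℚ) ≤ k := by positivity
    linarith
  have hKm : bmwKmin a b b a 0 k =
      max (max (max ((a : ℚ) + b) (max ((b : ℚ) + a) ((0 : ℚ) + k)))
        (max (max (((a : ℚ) + b + 2 * k / 3) - a) (((a : ℚ) + b + 2 * k / 3) - b))
          (((a : ℚ) + b + 2 * k / 3) - k)))
      (max (max ((((a : ℚ) + b + k / 3)) - b) ((((a : ℚ) + b + k / 3)) - a))
        ((((a : ℚ) + b + k / 3)) - 0)) := by
    rw [bmwKmin]
    simp only [hA, hB]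
    push_cast
    ring_nf
  constructor
  · intro h
    rw [bmwN] at h
    split_ifs at h with hc
    · obtain ⟨h1, -, -, h2⟩ := hc
      rw [hKm] at h1 h2
      rw [hKmax] at h2
      simp only [max_le_iff] at h1 h2
      have ha0 : (0:ℚ) ≤ a := by positivity
      have hb0 : (0:ℚ) ≤ b := by positivity
      have hba' : (b:ℚ) ≤ a := by exact_mod_cast hba
      have t1 := h2.1.1.2.2
      have t2 := h2.1.2.1.1
      have t3 := h2.1.2.1.2
      have t4 := h1.2.2
      have e2 : (a:ℚ) = b := by linarith
      have hab : a = b := by exact_mod_cast e2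
      have hk : (k:ℚ) = ((3*a : ℕ) : ℚ) := by push_cast; linarith
      exact ⟨hab, by exact_mod_cast hk⟩
    · norm_num at h
  · rintro ⟨rfl, rfl⟩
    have ha0 : 0 < a := by
      rcases Nat.eq_zero_or_pos a with h | h
      · exact absurd (Or.inl ⟨h, h⟩) hsc
      · exact h
    have ha0' : (0:ℚ) < a := by exact_mod_cast ha0
    have hKle : bmwKmin a a a a 0 ((3*a : ℕ) : ℤ) ≤ (3:ℚ) * a := by
      rw [hKm]
      simp only [max_le_iff]
      refine ⟨⟨⟨?_, ?_, ?_⟩, ⟨?_, ?_⟩, ?_⟩, ⟨?_, ?_⟩, ?_⟩ <;> push_cast <;> linarith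
    have hkq : ((3*a : ℕ) : ℚ) = 3 * a := by push_cast; ring
    have hKmax' : bmwKmax a a a a 0 ((3*a : ℕ) : ℤ) = (3:ℚ) * a := by
      rw [hKmax]; push_cast; ring
    rw [bmwN, if_pos]
    · have hle : bmwKmin a a a a 0 ((3*a : ℕ) : ℤ) ≤
          min (bmwKmax a a a a 0 ((3*a : ℕ) : ℤ)) ((3*a : ℕ) : ℚ) := by
        refine le_min ?_ ?_
        · rw [hKmax']; exact hKle
        · rw [hkq]; exact hKle
      linarith
    · refine ⟨?_, ⟨4*a, ?_⟩, ⟨3*a, ?_⟩, ?_⟩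
      · rw [hkq]; exact hKle
      · rw [hA]; push_cast; ring
      · rw [hB]; push_cast; ring
      · rw [hKmax']; exact hKle
end

section
/- With the BMW data for su(3)_k fusion of λ=(a,b) with μ=(b,a) (a ≥ b), for an off-diagonal weight ν of the form (p-2l, p+l) with integers 2 ≤ p ≤ a+b and 1 ≤ l ≤ min(⌊p/2⌋, b), the quantities k₀max = a+b+p-l and k₀min = a+b-l + max(p-b,l) + max(p-a,l); hence the affine fusion multiplicity is N^(k)(p,l) = min(k, a+b+p-l) - a - b + l - max(p-b,l) - max(p-a,l) + 1 whenever k ≥ k₀min. -/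
theorem stmt_5 (a b p l k : ℕ) (hba : b ≤ a) (hp2 : 2 ≤ p) (hpab : p ≤ a + b)
    (hl1 : 1 ≤ l) (hl : l ≤ min (p / 2) b) :
    bmwKmax a b b a ((p : ℤ) - 2 * l) ((p : ℤ) + l) = (a : ℚ) + b + p - l ∧
    bmwKmin a b b a ((p : ℤ) - 2 * l) ((p : ℤ) + l)
      = (a : ℚ) + b - l + max ((p : ℚ) - b) l + max ((p : ℚ) - a) l ∧
    (bmwKmin a b b a ((p : ℤ) - 2 * l) ((p : ℤ) + l) ≤ (k : ℚ) →
      bmwN k a b b a ((p : ℤ) - 2 * l) ((p : ℤ) + l)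
        = min (k : ℚ) ((a : ℚ) + b + p - l) - a - b + l
            - max ((p : ℚ) - b) l - max ((p : ℚ) - a) l + 1) := by
  have hbq : (b:ℚ) ≤ a := by exact_mod_cast hba
  have hpq : (2:ℚ) ≤ p := by exact_mod_cast hp2
  have habq : (p:ℚ) ≤ (a:ℚ) + b := by exact_mod_cast hpab
  have hl1q : (1:ℚ) ≤ l := by exact_mod_cast hl1
  have hlp2 : l ≤ p / 2 := le_trans hl (min_le_left _ _)
  have h2ln : 2 * l ≤ p := by omega
  have h2l : 2 * (l:ℚ) ≤ p := by exact_mod_cast h2ln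
  have hlbn : l ≤ b := le_trans hl (min_le_right _ _)
  have hlb : (l:ℚ) ≤ b := by exact_mod_cast hlbn
  have hAB : bmwA a b b a ((p : ℤ) - 2 * l) ((p : ℤ) + l) = (a:ℚ) + b + p := by
    unfold bmwA; push_cast; ring
  have hBB : bmwB a b b a ((p : ℤ) - 2 * l) ((p : ℤ) + l) = (a:ℚ) + b + p - l := by
    unfold bmwB; push_cast; ring
  have hkmax : bmwKmax a b b a ((p : ℤ) - 2 * l) ((p : ℤ) + l) = (a:ℚ) + b + p - l := by
    unfold bmwKmax; rw [hAB, hBB, min_eq_right (by linarith)]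
  have hkmin : bmwKmin a b b a ((p : ℤ) - 2 * l) ((p : ℤ) + l)
      = (a : ℚ) + b - l + max ((p : ℚ) - b) l + max ((p : ℚ) - a) l := by
    simp only [bmwKmin]
    rw [hAB, hBB]
    push_cast
    rcases le_total ((p:ℚ) - b) (l:ℚ) with h1 | h1 <;>
      rcases le_total ((p:ℚ) - a) (l:ℚ) with h2 | h2
    · rw [max_eq_right h1, max_eq_right h2]
      refine le_antisymm ?_ ?_
      · repeat' apply max_le
        all_goals linarith
      · refine le_trans ?_ ((le_max_right _ _).trans (le_max_right _ _))
        linarith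
    · rw [max_eq_right h1, max_eq_left h2]
      refine le_antisymm ?_ ?_
      · repeat' apply max_le
        all_goals linarith
      · refine le_trans ?_ (((le_max_left _ _).trans (le_max_left _ _)).trans (le_max_right _ _) |>.trans (le_max_left _ _))
        linarith
    · rw [max_eq_left h1, max_eq_right h2]
      refine le_antisymm ?_ ?_
      · repeat' apply max_le
        all_goals linarith
      · refine le_trans ?_ (((le_max_right _ _).trans (le_max_left _ _)).trans (le_max_right _ _) |>.trans (le_max_left _ _))
        linarith
    · rw [max_eq_left h1, max_eq_left h2]
      refine le_antisymm ?_ ?_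
      · repeat' apply max_le
        all_goals linarith
      · refine le_trans ?_ (((le_max_right _ _).trans (le_max_right _ _)).trans (le_max_left _ _) |>.trans (le_max_left _ _))
        linarith
  have hmsum : max ((p : ℚ) - b) l + max ((p : ℚ) - a) l ≤ p := by
    rcases le_total ((p:ℚ) - b) (l:ℚ) with h1 | h1 <;>
      rcases le_total ((p:ℚ) - a) (l:ℚ) with h2 | h2 <;>
      first
        | (rw [max_eq_right h1, max_eq_right h2]; linarith)
        | (rw [max_eq_right h1, max_eq_left h2]; linarith)
        | (rw [max_eq_left h1, max_eq_right h2]; linarith)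
        | (rw [max_eq_left h1, max_eq_left h2]; linarith)
  refine ⟨hkmax, hkmin, fun hk => ?_⟩
  have hcond : bmwKmin a b b a ((p : ℤ) - 2 * l) ((p : ℤ) + l) ≤ (k : ℚ) ∧
      (∃ n : ℕ, bmwA a b b a ((p : ℤ) - 2 * l) ((p : ℤ) + l) = n) ∧
      (∃ n : ℕ, bmwB a b b a ((p : ℤ) - 2 * l) ((p : ℤ) + l) = n) ∧
      bmwKmin a b b a ((p : ℤ) - 2 * l) ((p : ℤ) + l) ≤
        bmwKmax a b b a ((p : ℤ) - 2 * l) ((p : ℤ) + l) := by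
    refine ⟨hk, ⟨a + b + p, by rw [hAB]; push_cast; ring⟩,
      ⟨a + b + p - l, by rw [hBB, Nat.cast_sub (by omega)]; push_cast; ring⟩, ?_⟩
    rw [hkmin, hkmax]
    linarith
  unfold bmwN
  rw [if_pos hcond, hkmax, hkmin, min_comm]
  ring
end

section
/- With the BMW data for su(3)_k fusion of λ=(a,b) with μ=(b,a) (a ≥ b ≥ 0), for a diagonal weight ν = (p,p) with p ≥ 0, one has k₀max = a+b+p and k₀min = a+b+p - min(p, b, a+b-p); consequently the affine multiplicity is N^(k)(p) = min(k, a+b+p) - a - b - max(p-b,0) - max(p-a,0) + 1 when this is nonnegative and p ≤ a+b, and the representation (p,p) appears in (a,b)×(b,a) at level k if and only if either 0 ≤ p ≤ min(a, k-a), or (k ≥ 2a+2 and a+1 ≤ p ≤ min(a+b, ⌊k/2⌋)). -/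
lemma bmw_hA (a b p : ℕ) : bmwA a b b a p p = (a:ℚ)+b+p := by
  unfold bmwA; push_cast; ring

lemma bmw_hB (a b p : ℕ) : bmwB a b b a p p = (a:ℚ)+b+p := by
  unfold bmwB; push_cast; ring

lemma bmw_hKmax (a b p : ℕ) : bmwKmax a b b a p p = (a:ℚ)+b+p := by
  unfold bmwKmax; rw [bmw_hA, bmw_hB, min_self]

lemma bmw_hKmin (a b p : ℕ) (hba : b ≤ a) :
    bmwKmin a b b a p p = (a:ℚ)+b+p - min (p:ℚ) (min (b:ℚ) ((a:ℚ)+b-p)) := by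
  have hbaQ : (b:ℚ) ≤ a := by exact_mod_cast hba
  have hp0 : (0:ℚ) ≤ p := by positivity
  have hb0 : (0:ℚ) ≤ b := by positivity
  have m1 : min (p:ℚ) (min (b:ℚ) ((a:ℚ)+b-p)) ≤ p := min_le_left _ _
  have m2 : min (p:ℚ) (min (b:ℚ) ((a:ℚ)+b-p)) ≤ b :=
    le_trans (min_le_right _ _) (min_le_left _ _)
  have m3 : min (p:ℚ) (min (b:ℚ) ((a:ℚ)+b-p)) ≤ (a:ℚ)+b-p :=
    le_trans (min_le_right _ _) (min_le_right _ _)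
  rw [bmwKmin, bmw_hA, bmw_hB]
  push_cast
  apply le_antisymm
  · refine max_le (max_le (max_le ?_ (max_le ?_ ?_)) (max_le (max_le ?_ ?_) ?_))
      (max_le (max_le ?_ ?_) ?_) <;> linarith
  · rcases le_total (p:ℚ) (min (b:ℚ) ((a:ℚ)+b-p)) with h|h
    · rw [min_eq_left h]
      exact le_trans (le_of_eq (by ring))
        (le_max_of_le_left (le_max_of_le_left (le_max_left _ _)))
    · rw [min_eq_right h]
      rcases le_total (b:ℚ) ((a:ℚ)+b-p) with h2|h2
      · rw [min_eq_left h2]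
        exact le_max_of_le_right (le_max_of_le_left (le_max_left _ _))
      · rw [min_eq_right h2]
        exact le_trans (le_of_eq (by ring))
          (le_max_of_le_left (le_max_of_le_left (le_max_of_le_right (le_max_right _ _))))

lemma bmw_subcast (x y : ℕ) : ((x - y : ℕ):ℚ) = max ((x:ℚ)-y) 0 := by
  rcases le_total y x with h|h
  · have hq : (y:ℚ) ≤ x := by exact_mod_cast h
    rw [Nat.cast_sub h, max_eq_left (by linarith)]
  · rw [Nat.sub_eq_zero_of_le h, max_eq_right (by
      have : (x:ℚ) ≤ y := by exact_mod_cast h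
      linarith)]
    simp

lemma bmw_msplit (a b p : ℕ) (hba : b ≤ a) :
    min (p:ℚ) (min (b:ℚ) ((a:ℚ)+b-p))
      = (p:ℚ) - max ((p:ℚ)-b) 0 - max ((p:ℚ)-a) 0 := by
  have hbaQ : (b:ℚ) ≤ a := by exact_mod_cast hba
  have hp0 : (0:ℚ) ≤ p := by positivity
  have hb0 : (0:ℚ) ≤ b := by positivity
  simp only [min_def, max_def]
  split_ifs <;> linarith

lemma bmw_kminnat (a b p : ℕ) (hba : b ≤ a) :
    bmwKmin a b b a p p = ((a + b + (p - b) + (p - a) : ℕ):ℚ) := by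
  rw [bmw_hKmin a b p hba, bmw_msplit a b p hba]
  have := bmw_subcast p b
  have := bmw_subcast p a
  push_cast
  rw [bmw_subcast p b, bmw_subcast p a] at *
  linarith
theorem stmt_6 (a b p k : ℕ) (hba : b ≤ a) (hint : a + b ≤ k) :
    bmwKmax a b b a p p = (a : ℚ) + b + p ∧
    bmwKmin a b b a p p
      = (a : ℚ) + b + p - min (p : ℚ) (min (b : ℚ) ((a : ℚ) + b - p)) ∧
    ((0 : ℚ) ≤ min (k : ℚ) ((a : ℚ) + b + p) - a - b
        - max ((p : ℚ) - b) 0 - max ((p : ℚ) - a) 0 + 1 → p ≤ a + b →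
      bmwN k a b b a p p
        = min (k : ℚ) ((a : ℚ) + b + p) - a - b
            - max ((p : ℚ) - b) 0 - max ((p : ℚ) - a) 0 + 1) ∧
    (1 ≤ bmwN k a b b a p p ↔
      (p ≤ min a (k - a)) ∨ (2 * a + 2 ≤ k ∧ a + 1 ≤ p ∧ p ≤ min (a + b) (k / 2))) := by
  have hbaQ : (b:ℚ) ≤ a := by exact_mod_cast hba
  have hA := bmw_hA a b p
  have hB := bmw_hB a b p
  have hKmax := bmw_hKmax a b p
  have hKmin := bmw_hKmin a b p hba
  have hKminN := bmw_kminnat a b p hba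
  have hEA : ∃ n : ℕ, bmwA a b b a p p = n := ⟨a+b+p, by rw [hA]; push_cast; ring⟩
  have hEB : ∃ n : ℕ, bmwB a b b a p p = n := ⟨a+b+p, by rw [hB]; push_cast; ring⟩
  have hMs := bmw_msplit a b p hba
  have hc1 := bmw_subcast p b
  have hc2 := bmw_subcast p a
  refine ⟨hKmax, hKmin, ?_, ?_⟩
  · intro hpos hpab
    by_cases hk : a + b + (p - b) + (p - a) ≤ k
    · have h1 : bmwKmin a b b a p p ≤ (k:ℚ) := by rw [hKminN]; exact_mod_cast hk
      have h2 : bmwKmin a b b a p p ≤ bmwKmax a b b a p p := by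
        rw [hKminN, hKmax]
        exact_mod_cast (by omega : a + b + (p - b) + (p - a) ≤ a + b + p)
      unfold bmwN
      rw [if_pos ⟨h1, hEA, hEB, h2⟩, hKmax, hKmin, hMs, min_comm]
      ring
    · have hk' : k + 1 ≤ a + b + (p - b) + (p - a) := by omega
      unfold bmwN
      rw [if_neg]
      swap
      · rintro ⟨h1, -⟩
        rw [hKminN] at h1
        exact hk (by exact_mod_cast h1)
      have hkQ : (k:ℚ) + 1 ≤ (a:ℚ) + b + max ((p:ℚ)-b) 0 + max ((p:ℚ)-a) 0 := by
        rw [← hc1, ← hc2]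
        exact_mod_cast (by omega : k + 1 ≤ a + b + (p - b) + (p - a))
      have hle : (k:ℚ) ≤ (a:ℚ) + b + p := by
        exact_mod_cast (by omega : k ≤ a + b + p)
      rw [min_eq_left hle] at hpos ⊢
      linarith
  · constructor
    · intro h1
      unfold bmwN at h1
      split_ifs at h1 with hc
      · obtain ⟨hk1, -, -, hk2⟩ := hc
        rw [hKminN] at hk1 hk2
        rw [hKmax] at hk2
        have n1 : a + b + (p - b) + (p - a) ≤ k := by exact_mod_cast hk1
        have n2 : a + b + (p - b) + (p - a) ≤ a + b + p := by exact_mod_cast hk2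
        omega
      · norm_num at h1
    · intro h
      have n1 : a + b + (p - b) + (p - a) ≤ k := by omega
      have h1 : bmwKmin a b b a p p ≤ (k:ℚ) := by rw [hKminN]; exact_mod_cast n1
      have h2 : bmwKmin a b b a p p ≤ bmwKmax a b b a p p := by
        rw [hKminN, hKmax]
        exact_mod_cast (by omega : a + b + (p - b) + (p - a) ≤ a + b + p)
      have h3 : bmwKmin a b b a p p ≤ min (bmwKmax a b b a p p) (k:ℚ) := le_min h2 h1
      unfold bmwN
      rw [if_pos ⟨h1, hEA, hEB, h2⟩]
      linarith
end

section
/- Let a ≥ b ≥ 0 and k ≥ a+b with the su(3)_k BMW fusion multiplicity N^(k)_{(a,b),(b,a)}(ν). Suppose the weight ν = (2k-3p, 3p-k) lies in the set Q₁, i.e. b ≥ 2, 2a+3 ≤ k ≤ 2a+2b-1, and ⌈(k+1)/2⌉ ≤ p ≤ min(a+b, k-a-1, ⌊2k/3⌋, ⌊(b+k)/2⌋). Then the weight w₁ = (a-1, b+2) appears in the fusion (a,b)×ν at level k, i.e. N^(k)_{(a,b),ν}(w₁) ≥ 1. -/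
theorem stmt_7 (a b p k : ℕ) (hba : b ≤ a) (hint : a + b ≤ k)
    (hb2 : 2 ≤ b) (hk1 : 2 * a + 3 ≤ k) (hk2 : k ≤ 2 * a + 2 * b - 1)
    (hp1 : k + 1 ≤ 2 * p) (hp2 : p ≤ a + b) (hp3 : p + a + 1 ≤ k)
    (hp4 : 3 * p ≤ 2 * k) (hp5 : 2 * p ≤ b + k) :
    1 ≤ bmwN k a b (2 * (k : ℤ) - 3 * p) (3 * (p : ℤ) - k) ((a : ℤ) - 1) ((b : ℤ) + 2) := by
  have hple : p ≤ a + b + k + 1 := by omega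
  qify at hba hint hb2 hk1 hp1 hp2 hp3 hp4 hp5
  have hA : bmwA a b (2 * (k : ℤ) - 3 * p) (3 * (p : ℤ) - k) ((a : ℤ) - 1) ((b : ℤ) + 2)
      = (a : ℚ) + b + k - p + 1 := by unfold bmwA; push_cast; ring
  have hB : bmwB a b (2 * (k : ℤ) - 3 * p) (3 * (p : ℤ) - k) ((a : ℤ) - 1) ((b : ℤ) + 2)
      = (a : ℚ) + b + p := by unfold bmwB; push_cast; ring
  have hminK : bmwKmin a b (2 * (k : ℤ) - 3 * p) (3 * (p : ℤ) - k) ((a : ℤ) - 1) ((b : ℤ) + 2)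
      ≤ (k : ℚ) := by
    unfold bmwKmin
    rw [hA, hB]
    simp only [max_le_iff]
    push_cast
    refine ⟨⟨⟨?_, ?_, ?_⟩, ⟨?_, ?_⟩, ?_⟩, ⟨?_, ?_⟩, ?_⟩ <;> linarith
  have hminB : bmwKmin a b (2 * (k : ℤ) - 3 * p) (3 * (p : ℤ) - k) ((a : ℤ) - 1) ((b : ℤ) + 2)
      ≤ (a : ℚ) + b + p := by
    unfold bmwKmin
    rw [hA, hB]
    simp only [max_le_iff]
    push_cast
    refine ⟨⟨⟨?_, ?_, ?_⟩, ⟨?_, ?_⟩, ?_⟩, ⟨?_, ?_⟩, ?_⟩ <;> linarith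
  have hminmax : bmwKmin a b (2 * (k : ℤ) - 3 * p) (3 * (p : ℤ) - k) ((a : ℤ) - 1) ((b : ℤ) + 2)
      ≤ bmwKmax a b (2 * (k : ℤ) - 3 * p) (3 * (p : ℤ) - k) ((a : ℤ) - 1) ((b : ℤ) + 2) := by
    unfold bmwKmax
    rw [hA, hB, le_min_iff]
    exact ⟨by linarith, hminB⟩
  unfold bmwN
  rw [if_pos]
  · have h1 := le_min hminmax hminK
    linarith
  · refine ⟨hminK, ⟨a + b + k + 1 - p, ?_⟩, ⟨a + b + p, ?_⟩, hminmax⟩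
    · rw [hA]
      push_cast [hple]
      ring
    · rw [hB]; push_cast; ring
end

section
/- Let a ≥ b ≥ 0 and k with b ≥ 2, 2a+3 ≤ k ≤ 2a+2b-1, and let p be an integer with ⌈(k+1)/2⌉ ≤ p ≤ min(a+b, k-a-1, ⌊2k/3⌋, ⌊(b+k)/2⌋). Then for μ = (2k-3p, 3p-k) and ν = (a-2, b+1) (assuming a ≥ 2), the su(3)_k BMW affine multiplicity N^(k)_{(a,b),μ}(ν) ≥ 1; concretely, with k₀max = a+b+k-p and k₀min = max(k, a+b+2p-k, b+1+p, a-1+p), one has k ≥ k₀min. -/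
theorem stmt_8 (a b p k : ℕ) (hba : b ≤ a) (ha2 : 2 ≤ a) (hint : a + b ≤ k)
    (hb2 : 2 ≤ b) (hk1 : 2 * a + 3 ≤ k) (hk2 : k ≤ 2 * a + 2 * b - 1)
    (hp1 : k + 1 ≤ 2 * p) (hp2 : p ≤ a + b) (hp3 : p + a + 1 ≤ k)
    (hp4 : 3 * p ≤ 2 * k) (hp5 : 2 * p ≤ b + k) :
    max (max (k : ℚ) ((a : ℚ) + b + 2 * p - k)) (max ((b : ℚ) + 1 + p) ((a : ℚ) - 1 + p))
        ≤ (k : ℚ) ∧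
    1 ≤ bmwN k a b (2 * (k : ℤ) - 3 * p) (3 * (p : ℤ) - k) ((a : ℤ) - 2) ((b : ℤ) + 1) := by
  have h1 : (b:ℚ) ≤ a := by exact_mod_cast hba
  have h2 : (2:ℚ) ≤ a := by exact_mod_cast ha2
  have h3 : (2:ℚ) ≤ b := by exact_mod_cast hb2
  have h4 : 2*(a:ℚ)+3 ≤ k := by exact_mod_cast hk1
  have h6 : (k:ℚ)+1 ≤ 2*p := by exact_mod_cast hp1
  have h7 : (p:ℚ) ≤ a+b := by exact_mod_cast hp2
  have h8 : (p:ℚ)+a+1 ≤ k := by exact_mod_cast hp3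
  have h9 : 3*(p:ℚ) ≤ 2*k := by exact_mod_cast hp4
  have h10 : 2*(p:ℚ) ≤ b+k := by exact_mod_cast hp5
  have hA : bmwA a b (2*(k:ℤ)-3*p) (3*(p:ℤ)-k) ((a:ℤ)-2) ((b:ℤ)+1) = (a:ℚ)+b+k-p := by
    unfold bmwA; push_cast; ring
  have hB : bmwB a b (2*(k:ℤ)-3*p) (3*(p:ℤ)-k) ((a:ℤ)-2) ((b:ℤ)+1) = (a:ℚ)+b+p-1 := by
    unfold bmwB; push_cast; ring
  have hkmin : bmwKmin a b (2*(k:ℤ)-3*p) (3*(p:ℤ)-k) ((a:ℤ)-2) ((b:ℤ)+1) ≤ (k:ℚ) := by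
    unfold bmwKmin
    simp only [hA, hB, max_le_iff]
    push_cast
    and_intros <;> linarith
  have hkA : (k:ℚ) ≤ (a:ℚ)+b+k-p := by linarith
  have hkB : (k:ℚ) ≤ (a:ℚ)+b+p-1 := by linarith
  have hkmax : (k:ℚ) ≤ bmwKmax a b (2*(k:ℤ)-3*p) (3*(p:ℤ)-k) ((a:ℤ)-2) ((b:ℤ)+1) := by
    unfold bmwKmax
    rw [hA, hB]
    exact le_min hkA hkB
  refine ⟨by simp only [max_le_iff]; and_intros <;> linarith, ?_⟩
  unfold bmwN
  rw [if_pos]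
  · rw [min_eq_right hkmax]
    linarith
  · refine ⟨hkmin, ⟨a+b+k-p, ?_⟩, ⟨a+b+p-1, ?_⟩, le_trans hkmin hkmax⟩
    · rw [hA, Nat.cast_sub (by omega)]; push_cast; ring
    · rw [hB, Nat.cast_sub (by omega)]; push_cast; ring
end
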